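/- arXiv:2004.05873 — 7 statements merged into one kernel-verified Lean document; each statement's English description precedes it below -/
import Mathlib

section
/- For any nonzero s-sparse vector x in ℝⁿ, the quantity κ(x) = (‖x‖₁ · ‖x‖_∞) / ‖x‖₂² satisfies κ(x) ≤ (√s + 1)/2. -/
open Finset Real

set_option maxHeartbeats 1000000 in
theorem stmt_0 (n s : ℕ) (x : Fin n → ℝ) (hx : x ≠ 0)
    (hsparse : (Finset.univ.filter (fun i => x i ≠ 0)).card ≤ s) :
    (∑ i, |x i|) * (⨆ i, |x i|) / (∑ i, (x i) ^ 2)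
      ≤ (Real.sqrt s + 1) / 2 := by
  obtain ⟨j, hj⟩ : ∃ j, x j ≠ 0 := by
    by_contra h; push_neg at h; exact hx (funext h)
  haveI : Nonempty (Fin n) := ⟨j⟩
  obtain ⟨i0, -, hi0⟩ := Finset.exists_max_image Finset.univ (fun i => |x i|)
    ⟨j, Finset.mem_univ j⟩
  have hsup : (⨆ i, |x i|) = |x i0| := by
    apply le_antisymm
    · exact ciSup_le fun i => hi0 i (Finset.mem_univ i)
    · exact le_ciSup (f := fun i => |x i|) (Set.Finite.bddAbove (Set.finite_range _)) i0
  set M := |x i0| with hMdef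
  have hMpos : 0 < M := lt_of_lt_of_le (abs_pos.mpr hj) (hi0 j (Finset.mem_univ j))
  set F := Finset.univ.filter (fun i : Fin n => x i ≠ 0) with hF
  have hi0F : i0 ∈ F := by
    simp only [hF, Finset.mem_filter, Finset.mem_univ, true_and]
    intro h; rw [hMdef, h, abs_zero] at hMpos; exact lt_irrefl 0 hMpos
  set T := F.erase i0 with hT
  have hcardT : (T.card : ℝ) + 1 ≤ s := by
    have : T.card + 1 ≤ s := by
      have h := Finset.card_erase_add_one hi0F
      rw [hT]
      omega
    exact_mod_cast this
  set S1 := ∑ i, |x i| with hS1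
  set S2 := ∑ i, (x i) ^ 2 with hS2
  have hzero1 : ∀ i ∈ Finset.univ \ F, |x i| = 0 := by
    intro i hi
    simp only [hF, Finset.mem_sdiff, Finset.mem_filter, Finset.mem_univ, true_and,
      not_not] at hi
    rw [hi, abs_zero]
  have hzero2 : ∀ i ∈ Finset.univ \ F, (x i) ^ 2 = 0 := by
    intro i hi
    simp only [hF, Finset.mem_sdiff, Finset.mem_filter, Finset.mem_univ, true_and,
      not_not] at hi
    rw [hi]; ring
  have hsub : F ⊆ Finset.univ := Finset.subset_univ F
  have hsum1 : ∑ i ∈ T, |x i| = S1 - M := by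
    have h1 : S1 = ∑ i ∈ F, |x i| :=
      (Finset.sum_subset hsub (fun i _ hi => hzero1 i (Finset.mem_sdiff.mpr ⟨Finset.mem_univ i, hi⟩))).symm
    rw [h1, ← Finset.add_sum_erase F _ hi0F, hT]; ring
  have hsum2 : ∑ i ∈ T, (x i) ^ 2 = S2 - M ^ 2 := by
    have h1 : S2 = ∑ i ∈ F, (x i) ^ 2 :=
      (Finset.sum_subset hsub (fun i _ hi => hzero2 i (Finset.mem_sdiff.mpr ⟨Finset.mem_univ i, hi⟩))).symm
    have : M ^ 2 = (x i0) ^ 2 := by rw [hMdef, sq_abs]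
    rw [h1, ← Finset.add_sum_erase F _ hi0F, this, hT]; ring
  have hCS : (S1 - M) ^ 2 ≤ (T.card : ℝ) * (S2 - M ^ 2) := by
    rw [← hsum1, ← hsum2]
    have := sq_sum_le_card_mul_sum_sq (s := T) (f := fun i => |x i|)
    simpa [sq_abs] using this
  have hS2pos : 0 < S2 := by
    have h1 : (x j) ^ 2 ≤ S2 :=
      Finset.single_le_sum (f := fun i => (x i) ^ 2) (fun i _ => sq_nonneg _) (Finset.mem_univ j)
    have : 0 < (x j) ^ 2 := by positivity
    linarith
  have hM2 : M ^ 2 ≤ S2 := by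
    have : (x i0) ^ 2 ≤ S2 :=
      Finset.single_le_sum (f := fun i => (x i) ^ 2) (fun i _ => sq_nonneg _) (Finset.mem_univ i0)
    rwa [hMdef, sq_abs]
  have hS1M : M ≤ S1 :=
    Finset.single_le_sum (f := fun i => |x i|) (fun i _ => abs_nonneg _) (Finset.mem_univ i0)
  set r := Real.sqrt T.card with hr
  set q := Real.sqrt s with hq
  have hr0 : 0 ≤ r := Real.sqrt_nonneg _
  have hq0 : 0 ≤ q := Real.sqrt_nonneg _
  have hr2 : r ^ 2 = (T.card : ℝ) := Real.sq_sqrt (by positivity)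
  have hq2 : (s : ℝ) = q ^ 2 := (Real.sq_sqrt (by positivity)).symm
  have hq2' : r ^ 2 + 1 ≤ q ^ 2 := by rw [hr2, ← hq2]; exact hcardT
  set B := Real.sqrt (S2 - M ^ 2) with hB
  have hB0 : 0 ≤ B := Real.sqrt_nonneg _
  have hB2 : B ^ 2 = S2 - M ^ 2 := Real.sq_sqrt (by linarith)
  have hle : S1 - M ≤ r * B := by
    have h1 : (S1 - M) ^ 2 ≤ (r * B) ^ 2 := by
      rw [mul_pow, hr2, hB2]; exact hCS
    have h2 : 0 ≤ r * B := mul_nonneg hr0 hB0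
    nlinarith
  rw [hsup, div_le_iff₀ hS2pos]
  have key : 2 * M ^ 2 - S2 + 2 * r * (M * B) ≤ q * S2 := by
    have hA2 : (M * B) ^ 2 = M ^ 2 * S2 - M ^ 4 := by rw [mul_pow, hB2]; ring
    have hid : (2 * M ^ 2 - S2) ^ 2 + 4 * (M * B) ^ 2 = S2 ^ 2 := by
      linear_combination 4 * hA2
    have hcauchy : (2 * M ^ 2 - S2 + 2 * r * (M * B)) ^ 2 ≤ (q * S2) ^ 2 := by
      have e1 : (2 * M ^ 2 - S2 + 2 * r * (M * B)) ^ 2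
          + (r * (2 * M ^ 2 - S2) - 2 * (M * B)) ^ 2
          = (1 + r ^ 2) * ((2 * M ^ 2 - S2) ^ 2 + 4 * (M * B) ^ 2) := by ring
      nlinarith [sq_nonneg (r * (2 * M ^ 2 - S2) - 2 * (M * B)), sq_nonneg S2]
    have h1 : 2 * M ^ 2 - S2 + 2 * r * (M * B)
        ≤ |2 * M ^ 2 - S2 + 2 * r * (M * B)| := le_abs_self _
    have h2 : |2 * M ^ 2 - S2 + 2 * r * (M * B)| ≤ |q * S2| := by
      rw [← Real.sqrt_sq_eq_abs, ← Real.sqrt_sq_eq_abs]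
      exact Real.sqrt_le_sqrt hcauchy
    have h3 : |q * S2| = q * S2 := abs_of_nonneg (mul_nonneg hq0 hS2pos.le)
    linarith
  have h4 : (S1 - M) * M ≤ r * B * M := mul_le_mul_of_nonneg_right hle hMpos.le
  nlinarith [key, h4]
end

section
/- Let 0 < q ≤ 1 and let A be an m×n real matrix. Suppose that for every nonzero h in the kernel of A, ‖h‖_q / ‖h‖₂ > 3^{1/q} · s^{1/q - 1/2}. Then for every s-sparse vector x₀ with x₀ ≠ 0 and every nonzero h in ker(A), ‖x₀‖_q^q / ‖x₀‖₂^q < ‖x₀ + h‖_q^q / ‖x₀ + h‖₂^q. In particular, every s-sparse vector x₀ is the unique minimizer of ‖x‖_q/‖x‖₂ subject to Ax = Ax₀. -/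
/-!
Let `T` be the support of `x₀`, so `#T ≤ s`. By the power-mean inequality,
`‖v_T‖_q^q ≤ s^(1 - q/2) ‖v‖₂^q` for every `v`. The `q`-triangle inequality on `T` gives
`‖x₀ + h‖_q^q ≥ ‖x₀‖_q^q + ‖h‖_q^q - 2 ‖h_T‖_q^q`, and the null space property makes this exceed
`‖x₀‖_q^q + s^(1 - q/2) ‖h‖₂^q`, while `‖x₀ + h‖₂^q ≤ ‖x₀‖₂^q + ‖h‖₂^q`. Together with
`‖x₀‖_q^q ≤ s^(1 - q/2) ‖x₀‖₂^q` this yields the strict inequality of the ratios; the second part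
is the first one for `h = x - x₀`, after taking `q`-th roots.
-/

open Finset Real

section

variable {ι : Type*}

theorem abs_add_rpow_le {q : ℝ} (hq0 : 0 ≤ q) (hq1 : q ≤ 1) (a b : ℝ) :
    |a + b| ^ q ≤ |a| ^ q + |b| ^ q :=
  (rpow_le_rpow (abs_nonneg _) (abs_add_le a b) hq0).trans
    (rpow_add_le_add_rpow (abs_nonneg a) (abs_nonneg b) hq0 hq1)

theorem sum_abs_rpow_le_card_rpow_mul (T : Finset ι) (x : ι → ℝ) {q : ℝ} (hq0 : 0 < q)
    (hq2 : q ≤ 2) :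
    ∑ i ∈ T, |x i| ^ q ≤ (#T : ℝ) ^ (1 - q / 2) * (∑ i ∈ T, x i ^ 2) ^ (q / 2) := by
  have hpow : ∀ i, (|x i| ^ q) ^ (2 / q) = x i ^ 2 := fun i => by
    rw [← rpow_mul (abs_nonneg _), mul_div_cancel₀ 2 hq0.ne', rpow_two, sq_abs]
  have power_mean := rpow_sum_le_const_mul_sum_rpow_of_nonneg (f := fun i => |x i| ^ q) (s := T)
    ((one_le_div hq0).mpr hq2) (fun i _ => by positivity)
  simp only [hpow] at power_mean
  calc ∑ i ∈ T, |x i| ^ q = ((∑ i ∈ T, |x i| ^ q) ^ (2 / q)) ^ (q / 2) := by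
        rw [← rpow_mul (by positivity), div_mul_div_cancel₀ hq0.ne', div_self two_ne_zero,
          rpow_one]
    _ ≤ ((#T : ℝ) ^ (2 / q - 1) * ∑ i ∈ T, x i ^ 2) ^ (q / 2) :=
        rpow_le_rpow (by positivity) power_mean (by positivity)
    _ = (#T : ℝ) ^ (1 - q / 2) * (∑ i ∈ T, x i ^ 2) ^ (q / 2) := by
        rw [mul_rpow (by positivity) (by positivity), ← rpow_mul (by positivity)]
        congr 2
        field_simp

variable [Fintype ι]

theorem sqrt_sum_sq_eq_norm (x : ι → ℝ) : √(∑ i, x i ^ 2) = ‖WithLp.toLp 2 x‖ := by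
  simp only [EuclideanSpace.norm_eq, Real.norm_eq_abs, sq_abs]

theorem sqrt_sum_sq_pos {x : ι → ℝ} (hx : x ≠ 0) : 0 < √(∑ i, x i ^ 2) := by
  rw [sqrt_sum_sq_eq_norm, norm_pos_iff]
  exact fun h => hx (congrArg WithLp.ofLp h)

theorem sqrt_sum_sq_add_le (x y : ι → ℝ) :
    √(∑ i, (x i + y i) ^ 2) ≤ √(∑ i, x i ^ 2) + √(∑ i, y i ^ 2) := by
  simp only [sqrt_sum_sq_eq_norm]
  exact norm_add_le (WithLp.toLp 2 x) (WithLp.toLp 2 y)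

theorem sum_abs_rpow_le_of_card_le {T : Finset ι} {s : ℕ} (hT : #T ≤ s) (x : ι → ℝ) {q : ℝ}
    (hq0 : 0 < q) (hq2 : q ≤ 2) :
    ∑ i ∈ T, |x i| ^ q ≤ (s : ℝ) ^ (1 - q / 2) * √(∑ i, x i ^ 2) ^ q := by
  rw [sqrt_eq_rpow, ← rpow_mul (by positivity), one_div_mul_eq_div]
  refine (sum_abs_rpow_le_card_rpow_mul T x hq0 hq2).trans (mul_le_mul ?_ ?_ ?_ ?_)
  · exact rpow_le_rpow (by positivity) (by exact_mod_cast hT) (by linarith)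
  · exact rpow_le_rpow (by positivity)
      (sum_le_sum_of_subset_of_nonneg (subset_univ T) fun i _ _ => sq_nonneg _) (by positivity)
  all_goals positivity

/-- On the support `T` of `x` the `q`-triangle inequality is used backwards,
`|x i|^q - |h i|^q ≤ |x i + h i|^q`; off `T` the two sides agree. -/
theorem sum_abs_rpow_sub_le_sum_abs_add_rpow {q : ℝ} (hq0 : 0 < q) (hq1 : q ≤ 1)
    {T : Finset ι} {x : ι → ℝ} (hx : ∀ i ∉ T, x i = 0) (h : ι → ℝ) :
    ∑ i, |x i| ^ q + ∑ i, |h i| ^ q - 2 * ∑ i ∈ T, |h i| ^ q ≤ ∑ i, |x i + h i| ^ q := by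
  classical
  rw [← sum_add_sum_compl T (fun i => |x i| ^ q : ι → ℝ),
    ← sum_add_sum_compl T (fun i => |h i| ^ q : ι → ℝ),
    ← sum_add_sum_compl T (fun i => |x i + h i| ^ q : ι → ℝ)]
  have on_T : ∑ i ∈ T, |x i| ^ q ≤ ∑ i ∈ T, |x i + h i| ^ q + ∑ i ∈ T, |h i| ^ q := by
    rw [← sum_add_distrib]
    refine sum_le_sum fun i _ => ?_
    simpa only [add_neg_cancel_right, abs_neg] using abs_add_rpow_le hq0.le hq1 (x i + h i) (-h i)
  have off_T : ∑ i ∈ Tᶜ, |x i| ^ q = 0 := sum_eq_zero fun i hi => by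
    simp [hx i (mem_compl.mp hi), zero_rpow hq0.ne']
  have off_T' : ∑ i ∈ Tᶜ, |x i + h i| ^ q = ∑ i ∈ Tᶜ, |h i| ^ q := sum_congr rfl fun i hi => by
    simp [hx i (mem_compl.mp hi)]
  linarith

theorem sum_abs_rpow_div_lt_of_card_support_le {q : ℝ} (hq0 : 0 < q) (hq1 : q ≤ 1) {s : ℕ}
    {x h : ι → ℝ} (hx : x ≠ 0) (hxs : #{i | x i ≠ 0} ≤ s)
    (hh : 3 * (s : ℝ) ^ (1 - q / 2) * √(∑ i, h i ^ 2) ^ q < ∑ i, |h i| ^ q) :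
    (∑ i, |x i| ^ q) / √(∑ i, x i ^ 2) ^ q
      < (∑ i, |x i + h i| ^ q) / √(∑ i, (x i + h i) ^ 2) ^ q := by
  set S := (s : ℝ) ^ (1 - q / 2)
  have hsupp : ∀ i ∉ ({i | x i ≠ 0} : Finset ι), x i = 0 := by simp
  have hx_sum : ∑ i, |x i| ^ q ≤ S * √(∑ i, x i ^ 2) ^ q := by
    calc ∑ i, |x i| ^ q = ∑ i ∈ {i | x i ≠ 0}, |x i| ^ q := by
          refine (sum_subset (subset_univ _) fun i _ hi => ?_).symm
          simp [hsupp i hi, zero_rpow hq0.ne']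
      _ ≤ _ := sum_abs_rpow_le_of_card_le hxs x hq0 (by linarith)
  have hh_supp := sum_abs_rpow_le_of_card_le hxs h hq0 (by linarith)
  have hxh := sum_abs_rpow_sub_le_sum_abs_add_rpow hq0 hq1 hsupp h
  have hA : 0 < √(∑ i, x i ^ 2) ^ q := rpow_pos_of_pos (sqrt_sum_sq_pos hx) q
  have hB : 0 ≤ √(∑ i, h i ^ 2) ^ q := by positivity
  have hu : 0 ≤ ∑ i, |x i| ^ q := by positivity
  have hgain : ∑ i, |x i| ^ q + S * √(∑ i, h i ^ 2) ^ q < ∑ i, |x i + h i| ^ q := by linarith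
  have hxh_ne : x + h ≠ 0 := by
    intro hzero
    have : ∀ i, x i + h i = 0 := congrFun hzero
    simp only [this, abs_zero, zero_rpow hq0.ne', sum_const_zero] at hgain
    nlinarith
  have hC_pos : 0 < √(∑ i, (x i + h i) ^ 2) ^ q := rpow_pos_of_pos (sqrt_sum_sq_pos hxh_ne) q
  have hC_le : √(∑ i, (x i + h i) ^ 2) ^ q ≤ √(∑ i, x i ^ 2) ^ q + √(∑ i, h i ^ 2) ^ q :=
    (rpow_le_rpow (sqrt_nonneg _) (sqrt_sum_sq_add_le x h) hq0.le).trans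
      (rpow_add_le_add_rpow (sqrt_nonneg _) (sqrt_nonneg _) hq0.le hq1)
  rw [div_lt_div_iff₀ hA hC_pos]
  calc (∑ i, |x i| ^ q) * √(∑ i, (x i + h i) ^ 2) ^ q
      ≤ (∑ i, |x i| ^ q) * (√(∑ i, x i ^ 2) ^ q + √(∑ i, h i ^ 2) ^ q) :=
        mul_le_mul_of_nonneg_left hC_le hu
    _ ≤ (∑ i, |x i| ^ q + S * √(∑ i, h i ^ 2) ^ q) * √(∑ i, x i ^ 2) ^ q := by
        nlinarith [mul_le_mul_of_nonneg_right hx_sum hB]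
    _ < (∑ i, |x i + h i| ^ q) * √(∑ i, x i ^ 2) ^ q := mul_lt_mul_of_pos_right hgain hA

theorem null_space_property_rpow {q : ℝ} (hq0 : 0 < q) (s : ℕ) {h : ι → ℝ} (hh : h ≠ 0)
    (hratio : (∑ i, |h i| ^ q) ^ (1 / q) / √(∑ i, h i ^ 2)
      > (3 : ℝ) ^ (1 / q) * (s : ℝ) ^ (1 / q - 1 / 2)) :
    3 * (s : ℝ) ^ (1 - q / 2) * √(∑ i, h i ^ 2) ^ q < ∑ i, |h i| ^ q := by
  have hsum : 0 ≤ ∑ i, |h i| ^ q := by positivity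
  have hlt := rpow_lt_rpow (by positivity) ((lt_div_iff₀ (sqrt_sum_sq_pos hh)).mp hratio) hq0
  rwa [mul_rpow (by positivity) (sqrt_nonneg _), mul_rpow (by positivity) (by positivity),
    ← rpow_mul (by norm_num), ← rpow_mul s.cast_nonneg, ← rpow_mul hsum,
    one_div_mul_cancel hq0.ne', show (1 / q - 1 / 2) * q = 1 - q / 2 by field_simp,
    rpow_one, rpow_one] at hlt

end

theorem rpow_one_div_div_lt_of_div_rpow_lt {q a b c d : ℝ} (hq : 0 < q) (ha : 0 ≤ a)
    (hb : 0 ≤ b) (hc : 0 ≤ c) (hd : 0 ≤ d) (h : a / b ^ q < c / d ^ q) :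
    a ^ (1 / q) / b < c ^ (1 / q) / d := by
  have hroot : ∀ x y : ℝ, 0 ≤ x → 0 ≤ y → (x / y ^ q) ^ (1 / q) = x ^ (1 / q) / y :=
    fun x y hx hy => by rw [div_rpow hx (by positivity), one_div, rpow_rpow_inv hy hq.ne']
  rw [← hroot a b ha hb, ← hroot c d hc hd]
  exact rpow_lt_rpow (by positivity) h (by positivity)

theorem stmt_3 (m n s : ℕ) (q : ℝ) (hq0 : 0 < q) (hq1 : q ≤ 1)
    (A : Matrix (Fin m) (Fin n) ℝ)
    (hker : ∀ h : Fin n → ℝ, h ≠ 0 → A.mulVec h = 0 →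
      (∑ i, |h i| ^ q) ^ (1 / q) / Real.sqrt (∑ i, (h i) ^ 2)
        > (3 : ℝ) ^ (1 / q) * (s : ℝ) ^ (1 / q - 1 / 2)) :
    (∀ x₀ : Fin n → ℝ, x₀ ≠ 0 →
        (Finset.univ.filter (fun i => x₀ i ≠ 0)).card ≤ s →
      ∀ h : Fin n → ℝ, h ≠ 0 → A.mulVec h = 0 →
        (∑ i, |x₀ i| ^ q) / (Real.sqrt (∑ i, (x₀ i) ^ 2)) ^ q
          < (∑ i, |x₀ i + h i| ^ q) / (Real.sqrt (∑ i, (x₀ i + h i) ^ 2)) ^ q) ∧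
    (∀ x₀ : Fin n → ℝ, x₀ ≠ 0 →
        (Finset.univ.filter (fun i => x₀ i ≠ 0)).card ≤ s →
      ∀ x : Fin n → ℝ, x ≠ x₀ → A.mulVec x = A.mulVec x₀ →
        (∑ i, |x₀ i| ^ q) ^ (1 / q) / Real.sqrt (∑ i, (x₀ i) ^ 2)
          < (∑ i, |x i| ^ q) ^ (1 / q) / Real.sqrt (∑ i, (x i) ^ 2)) := by
  have hnsp : ∀ h, h ≠ 0 → A.mulVec h = 0 →
      3 * (s : ℝ) ^ (1 - q / 2) * √(∑ i, h i ^ 2) ^ q < ∑ i, |h i| ^ q :=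
    fun h hh hAh => null_space_property_rpow hq0 s hh (hker h hh hAh)
  refine ⟨fun x₀ hx₀ hs h hh hAh =>
    sum_abs_rpow_div_lt_of_card_support_le hq0 hq1 hx₀ hs (hnsp h hh hAh), ?_⟩
  intro x₀ hx₀ hs x hx hAx
  have hAh : A.mulVec (x - x₀) = 0 := by rw [Matrix.mulVec_sub, hAx, sub_self]
  have key := sum_abs_rpow_div_lt_of_card_support_le hq0 hq1 hx₀ hs
    (hnsp _ (sub_ne_zero.mpr hx) hAh)
  simp only [Pi.sub_apply, add_sub_cancel] at key
  exact rpow_one_div_div_lt_of_div_rpow_lt hq0 (by positivity) (sqrt_nonneg _) (by positivity)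
    (sqrt_nonneg _) key
end

section
/- Let h ∈ ℝⁿ and for r ≥ 1 let T_r be the index set of the components of h ranked (r−1)s+1 through rs in decreasing order of magnitude. Then Σ_{r≥2} ‖h_{T_r}‖₂² ≤ (1/s) ‖h‖₁². -/
open Finset Real

/-!
Let `A` be the ℓ¹-mass of the `s` largest entries and `B` that of the rest. Every entry of
rank `> s` is at most the average `A / s` of the top block, so the squared tail is at most
`(A / s) · B ≤ (A + B)² / s`.
-/

namespace Antitone

variable {n s : ℕ} {f : Fin n → ℝ}

theorem card_mul_le_sum_val_lt (hf : Antitone f) {i : Fin n} (hi : s ≤ i.val) :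
    s * f i ≤ ∑ j with j.val < s, f j := by
  have hcard : #{j : Fin n | j.val < s} = s := by
    rw [Fin.card_filter_val_lt]
    exact min_eq_right (hi.trans_lt i.isLt).le
  have := card_nsmul_le_sum {j : Fin n | j.val < s} f (f i) fun j hj ↦
    hf (Fin.le_def.mpr ((mem_filter.mp hj).2.le.trans hi))
  rwa [hcard, nsmul_eq_mul] at this

theorem sum_sq_val_ge_le_mul_div (hf : Antitone f) (hf₀ : 0 ≤ f) (hs : 0 < s) :
    ∑ i with s ≤ i.val, f i ^ 2 ≤ (∑ i with s ≤ i.val, f i) * (∑ j with j.val < s, f j) / s := by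
  have hs' : (0 : ℝ) < s := by exact_mod_cast hs
  rw [sum_mul, sum_div]
  refine sum_le_sum fun i hi ↦ ?_
  rw [le_div_iff₀ hs', sq, mul_assoc, mul_comm (f i) s]
  exact mul_le_mul_of_nonneg_left (hf.card_mul_le_sum_val_lt (mem_filter.mp hi).2) (hf₀ i)

theorem sum_sq_val_ge_le (hf : Antitone f) (hf₀ : 0 ≤ f) (hs : 0 < s) :
    ∑ i with s ≤ i.val, f i ^ 2 ≤ (1 / s) * (∑ i, f i) ^ 2 := by
  set B := ∑ i with s ≤ i.val, f i
  set A := ∑ j with j.val < s, f j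
  have hA : 0 ≤ A := sum_nonneg fun j _ ↦ hf₀ j
  have hB : 0 ≤ B := sum_nonneg fun j _ ↦ hf₀ j
  have hsplit : B + A = ∑ i, f i := by
    simp only [B, A, ← not_le, sum_filter_add_sum_filter_not]
  calc ∑ i with s ≤ i.val, f i ^ 2 ≤ B * A / s := hf.sum_sq_val_ge_le_mul_div hf₀ hs
    _ ≤ (B + A) ^ 2 / s := by gcongr; nlinarith
    _ = (1 / s) * (∑ i, f i) ^ 2 := by rw [hsplit, one_div_mul_eq_div]

end Antitone

/-- if the entries of `h` are arranged in decreasing order of magnitude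
by the permutation `σ` (so that the blocks `T_r`, `r ≥ 1`, consist of the entries
ranked `(r-1)s+1` through `rs`), then the sum of `‖h_{T_r}‖₂²` over all blocks
`r ≥ 2` (i.e. over all indices of rank `> s`) is at most `(1/s)‖h‖₁²`. -/
theorem stmt_7 (n s : ℕ) (hs : 0 < s) (h : Fin n → ℝ) (σ : Equiv.Perm (Fin n))
    (hσ : ∀ i j : Fin n, i ≤ j → |h (σ j)| ≤ |h (σ i)|) :
    (∑ i ∈ Finset.univ.filter (fun i : Fin n => s ≤ i.val), (h (σ i)) ^ 2)
      ≤ (1 / (s : ℝ)) * (∑ i, |h i|) ^ 2 := by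
  have hsorted : Antitone fun i ↦ |h (σ i)| := hσ
  have := hsorted.sum_sq_val_ge_le (fun i ↦ abs_nonneg _) hs
  simpa only [sq_abs, Equiv.sum_comp σ fun i ↦ |h i|] using this
end

section
/- Let x₀ = (x₁,...,x_s, 0,...,0) ∈ ℝⁿ with |x₁| ≥ ... ≥ |x_s| > 0, and let h ∈ ℝⁿ with ‖h‖₁ ≤ |x_s|. Set β = Σ_{i=1}^s sgn(xᵢ)hᵢ and γ = Σ_{i=1}^s |hᵢ|, and define x' to agree with x = x₀ + h on coordinates 2,...,s−1 and s+1,...,n, with first coordinate x₁ + sgn(x₁)(γ+β)/2 and s-th coordinate x_s − sgn(x_s)(γ−β)/2. Then ‖x'‖₁ = ‖x‖₁ and ‖x'‖₂ ≥ ‖x‖₂; consequently ‖x‖₁/‖x‖₂ ≥ ‖x'‖₁/‖x'‖₂. -/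
/-!
On the support `S = {i < s}` write `x₀ + h = x₀ + sgn(x₀)·t` with `tᵢ = sgn(x₀ᵢ)hᵢ`. As
`|tᵢ| ≤ |x₀ᵢ|` no sign changes, so `‖x‖₁ = ‖x₀‖₁ + ∑ tᵢ` and
`‖x‖₂² = ‖x₀‖₂² + ∑ (2|x₀ᵢ|tᵢ + tᵢ²)`. The vector `x'` is `x₀ + sgn(x₀)·t'`, where `t'` puts the
positive mass `P = (γ + β)/2` of `t` on the largest coordinate and minus its negative mass
`N = (γ - β)/2` on the smallest. This keeps `∑ tᵢ = P - N`, hence the `ℓ¹` norm, while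
`∑ 2|x₀ᵢ|tᵢ ≤ 2|x₁|P - 2|x_s|N` and `∑ tᵢ² ≤ P² + N²` show that the `ℓ²` norm can only grow.
-/

open Finset Real

namespace Real

lemma sign_mul_sign_of_ne_zero {c : ℝ} (hc : c ≠ 0) : sign c * sign c = 1 := by
  rcases sign_apply_eq_of_ne_zero c hc with h | h <;> rw [h] <;> norm_num

lemma abs_sign_of_ne_zero {c : ℝ} (hc : c ≠ 0) : |sign c| = 1 := by
  rcases sign_apply_eq_of_ne_zero c hc with h | h <;> rw [h] <;> norm_num

lemma abs_add_sign_mul {c u : ℝ} (hc : c ≠ 0) (hu : |u| ≤ |c|) :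
    |c + sign c * u| = |c| + u := by
  rcases hc.lt_or_gt with h | h
  · rw [sign_of_neg h, abs_of_neg h] at *
    rw [abs_of_nonpos (by linarith [(abs_le.mp hu).1])]
    ring
  · rw [sign_of_pos h, abs_of_pos h] at *
    rw [abs_of_nonneg (by linarith [(abs_le.mp hu).1])]
    ring

lemma sq_add_sign_mul {c : ℝ} (hc : c ≠ 0) (u : ℝ) :
    (c + sign c * u) ^ 2 = c ^ 2 + (2 * |c| * u + u ^ 2) := by
  rcases hc.lt_or_gt with h | h
  · rw [sign_of_neg h, abs_of_neg h]; ring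
  · rw [sign_of_pos h, abs_of_pos h]; ring

end Real

lemma sq_eq_posPart_sq_add_negPart_sq (t : ℝ) : t ^ 2 = t⁺ ^ 2 + t⁻ ^ 2 := by
  rcases le_total t 0 with h | h
  · rw [posPart_eq_zero.mpr h, negPart_eq_neg.mpr h]; ring
  · rw [posPart_eq_self.mpr h, negPart_eq_zero.mpr h]; ring

namespace Finset

variable {ι : Type*}

lemma sum_abs_add_sign_mul {S : Finset ι} {x u : ι → ℝ} (hx : ∀ i ∈ S, x i ≠ 0)
    (hu : ∀ i ∈ S, |u i| ≤ |x i|) :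
    ∑ i ∈ S, |x i + sign (x i) * u i| = ∑ i ∈ S, |x i| + ∑ i ∈ S, u i := by
  rw [← sum_add_distrib]
  exact sum_congr rfl fun i hi => abs_add_sign_mul (hx i hi) (hu i hi)

lemma sum_sq_add_sign_mul {S : Finset ι} {x : ι → ℝ} (hx : ∀ i ∈ S, x i ≠ 0) (u : ι → ℝ) :
    ∑ i ∈ S, (x i + sign (x i) * u i) ^ 2
      = ∑ i ∈ S, x i ^ 2 + ∑ i ∈ S, (2 * |x i| * u i + u i ^ 2) := by
  rw [← sum_add_distrib]
  exact sum_congr rfl fun i hi => sq_add_sign_mul (hx i hi) (u i)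

lemma sum_abs_sign_mul {S : Finset ι} {x : ι → ℝ} (hx : ∀ i ∈ S, x i ≠ 0) (h : ι → ℝ) :
    ∑ i ∈ S, |sign (x i) * h i| = ∑ i ∈ S, |h i| :=
  sum_congr rfl fun i hi => by rw [abs_mul, abs_sign_of_ne_zero (hx i hi), one_mul]

lemma sum_sq_le_sq_sum_posPart_add_sq_sum_negPart (S : Finset ι) (t : ι → ℝ) :
    ∑ i ∈ S, t i ^ 2 ≤ (∑ i ∈ S, (t i)⁺) ^ 2 + (∑ i ∈ S, (t i)⁻) ^ 2 := by
  simp only [sq_eq_posPart_sq_add_negPart_sq (t _), sum_add_distrib]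
  exact add_le_add (sum_sq_le_sq_sum_of_nonneg fun i _ => posPart_nonneg _)
    (sum_sq_le_sq_sum_of_nonneg fun i _ => negPart_nonneg _)

lemma sum_mul_le_of_mem_Icc {S : Finset ι} {w : ι → ℝ} {m M : ℝ}
    (hw : ∀ i ∈ S, w i ∈ Set.Icc m M) (t : ι → ℝ) :
    ∑ i ∈ S, w i * t i ≤ M * ∑ i ∈ S, (t i)⁺ - m * ∑ i ∈ S, (t i)⁻ := by
  rw [mul_sum, mul_sum, ← sum_sub_distrib]
  refine sum_le_sum fun i hi => ?_
  obtain ⟨hm, hM⟩ := hw i hi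
  have hpos := posPart_nonneg (t i)
  have hneg := negPart_nonneg (t i)
  calc w i * t i = w i * (t i)⁺ - w i * (t i)⁻ := by rw [← mul_sub, posPart_sub_negPart]
    _ ≤ M * (t i)⁺ - m * (t i)⁻ := by gcongr

lemma sum_posPart_add_sum_negPart (S : Finset ι) (t : ι → ℝ) :
    ∑ i ∈ S, (t i)⁺ + ∑ i ∈ S, (t i)⁻ = ∑ i ∈ S, |t i| := by
  rw [← sum_add_distrib]
  exact sum_congr rfl fun i _ => posPart_add_negPart (t i)

lemma sum_posPart_sub_sum_negPart (S : Finset ι) (t : ι → ℝ) :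
    ∑ i ∈ S, (t i)⁺ - ∑ i ∈ S, (t i)⁻ = ∑ i ∈ S, t i := by
  rw [← sum_sub_distrib]
  exact sum_congr rfl fun i _ => posPart_sub_negPart (t i)

lemma sum_le_sum_of_sum_le_of_eq_off {M : Type*} [Fintype ι] [DecidableEq ι]
    [AddCommMonoid M] [PartialOrder M] [IsOrderedAddMonoid M] {S : Finset ι} {f g : ι → M}
    (hS : ∑ i ∈ S, f i ≤ ∑ i ∈ S, g i) (hout : ∀ i ∉ S, f i = g i) :
    ∑ i, f i ≤ ∑ i, g i := by
  rw [← sum_add_sum_compl S f, ← sum_add_sum_compl S g,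
    sum_congr rfl fun i hi => hout i (mem_compl.mp hi)]
  exact add_le_add_left hS _

lemma sum_eq_sum_of_sum_eq_of_eq_off {M : Type*} [Fintype ι] [DecidableEq ι]
    [AddCommMonoid M] {S : Finset ι} {f g : ι → M}
    (hS : ∑ i ∈ S, f i = ∑ i ∈ S, g i) (hout : ∀ i ∉ S, f i = g i) :
    ∑ i, f i = ∑ i, g i := by
  rw [← sum_add_sum_compl S f, ← sum_add_sum_compl S g, hS,
    sum_congr rfl fun i hi => hout i (mem_compl.mp hi)]

end Finset

section Concentrate

variable {ι : Type*} [DecidableEq ι]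

def concentrate (S : Finset ι) (i₀ i₁ : ι) (t : ι → ℝ) : ι → ℝ := fun i =>
  if i = i₀ then ∑ j ∈ S, (t j)⁺ else if i = i₁ then -∑ j ∈ S, (t j)⁻ else 0

variable {S : Finset ι} {i₀ i₁ : ι}

lemma sum_concentrate_apply (h₀ : i₀ ∈ S) (h₁ : i₁ ∈ S) (hne : i₀ ≠ i₁) (t : ι → ℝ)
    (G : ι → ℝ → ℝ) (hG : ∀ i, G i 0 = 0) :
    ∑ i ∈ S, G i (concentrate S i₀ i₁ t i)
      = G i₀ (∑ i ∈ S, (t i)⁺) + G i₁ (-∑ i ∈ S, (t i)⁻) := by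
  have hsplit : ∀ i, G i (concentrate S i₀ i₁ t i)
      = (if i = i₀ then G i₀ (∑ i ∈ S, (t i)⁺) else 0)
        + (if i = i₁ then G i₁ (-∑ i ∈ S, (t i)⁻) else 0) := by
    intro i
    unfold concentrate
    split_ifs <;> simp_all
  rw [sum_congr rfl fun i _ => hsplit i, sum_add_distrib, sum_ite_eq', sum_ite_eq',
    if_pos h₀, if_pos h₁]

lemma sum_concentrate (h₀ : i₀ ∈ S) (h₁ : i₁ ∈ S) (hne : i₀ ≠ i₁) (t : ι → ℝ) :
    ∑ i ∈ S, concentrate S i₀ i₁ t i = ∑ i ∈ S, t i := by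
  rw [sum_concentrate_apply h₀ h₁ hne t (fun _ u => u) fun _ => rfl, ← sub_eq_add_neg,
    sum_posPart_sub_sum_negPart]

lemma abs_concentrate_le (t : ι → ℝ) (i : ι) :
    |concentrate S i₀ i₁ t i| ≤ ∑ j ∈ S, |t j| := by
  have hpos : 0 ≤ ∑ j ∈ S, (t j)⁺ := sum_nonneg fun j _ => posPart_nonneg _
  have hneg : 0 ≤ ∑ j ∈ S, (t j)⁻ := sum_nonneg fun j _ => negPart_nonneg _
  rw [← sum_posPart_add_sum_negPart]
  unfold concentrate
  split_ifs
  · rw [abs_of_nonneg hpos]; linarith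
  · rw [abs_neg, abs_of_nonneg hneg]; linarith
  · rw [abs_zero]; positivity

lemma sum_two_mul_add_sq_le_concentrate (h₀ : i₀ ∈ S) (h₁ : i₁ ∈ S) (hne : i₀ ≠ i₁)
    {w : ι → ℝ} (hw : ∀ i ∈ S, w i ∈ Set.Icc (w i₁) (w i₀)) (t : ι → ℝ) :
    ∑ i ∈ S, (2 * w i * t i + t i ^ 2)
      ≤ ∑ i ∈ S, (2 * w i * concentrate S i₀ i₁ t i + concentrate S i₀ i₁ t i ^ 2) := by
  rw [sum_concentrate_apply h₀ h₁ hne t (fun i u => 2 * w i * u + u ^ 2) (by simp),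
    sum_add_distrib]
  have hcross := sum_mul_le_of_mem_Icc hw t
  have hsq := sum_sq_le_sq_sum_posPart_add_sq_sum_negPart S t
  simp only [mul_assoc, ← mul_sum] at hcross ⊢
  linarith

lemma sum_abs_add_sign_mul_concentrate (h₀ : i₀ ∈ S) (h₁ : i₁ ∈ S) (hne : i₀ ≠ i₁)
    {x : ι → ℝ} (hx : ∀ i ∈ S, x i ≠ 0) (hw : ∀ i ∈ S, |x i₁| ≤ |x i|) {t : ι → ℝ}
    (ht : ∑ i ∈ S, |t i| ≤ |x i₁|) :
    ∑ i ∈ S, |x i + sign (x i) * concentrate S i₀ i₁ t i|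
      = ∑ i ∈ S, |x i + sign (x i) * t i| := by
  have hle : ∀ i ∈ S, ∑ j ∈ S, |t j| ≤ |x i| := fun i hi => ht.trans (hw i hi)
  rw [sum_abs_add_sign_mul hx fun i hi => (abs_concentrate_le t i).trans (hle i hi),
    sum_abs_add_sign_mul hx fun i hi =>
      (single_le_sum (fun j _ => abs_nonneg (t j)) hi).trans (hle i hi),
    sum_concentrate h₀ h₁ hne]

lemma sum_sq_add_sign_mul_le_concentrate (h₀ : i₀ ∈ S) (h₁ : i₁ ∈ S) (hne : i₀ ≠ i₁)
    {x : ι → ℝ} (hx : ∀ i ∈ S, x i ≠ 0) (hw : ∀ i ∈ S, |x i| ∈ Set.Icc (|x i₁|) (|x i₀|))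
    (t : ι → ℝ) :
    ∑ i ∈ S, (x i + sign (x i) * t i) ^ 2
      ≤ ∑ i ∈ S, (x i + sign (x i) * concentrate S i₀ i₁ t i) ^ 2 := by
  rw [sum_sq_add_sign_mul hx, sum_sq_add_sign_mul hx]
  exact add_le_add_right (sum_two_mul_add_sq_le_concentrate h₀ h₁ hne hw t) _

lemma concentrate_sign_mul_apply {x : ι → ℝ} (hx : ∀ i ∈ S, x i ≠ 0) (h : ι → ℝ) (i : ι) :
    concentrate S i₀ i₁ (fun j => sign (x j) * h j) i =
      if i = i₀ then (∑ j ∈ S, |h j| + ∑ j ∈ S, sign (x j) * h j) / 2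
      else if i = i₁ then -((∑ j ∈ S, |h j| - ∑ j ∈ S, sign (x j) * h j) / 2) else 0 := by
  have hsum := sum_posPart_add_sum_negPart S fun j => sign (x j) * h j
  have hdiff := sum_posPart_sub_sum_negPart S fun j => sign (x j) * h j
  rw [sum_abs_sign_mul hx] at hsum
  unfold concentrate
  split_ifs
  · linarith
  · linarith
  · rfl

theorem sum_abs_eq_and_sum_sq_le_of_concentrate [Fintype ι] (h₀ : i₀ ∈ S) (h₁ : i₁ ∈ S)
    (hne : i₀ ≠ i₁) {x₀ h x' : ι → ℝ} (hx₀ : ∀ i ∈ S, x₀ i ≠ 0)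
    (hw : ∀ i ∈ S, |x₀ i| ∈ Set.Icc (|x₀ i₁|) (|x₀ i₀|)) (hh : ∑ i ∈ S, |h i| ≤ |x₀ i₁|)
    (hx'S : ∀ i ∈ S,
      x' i = x₀ i + sign (x₀ i) * concentrate S i₀ i₁ (fun j => sign (x₀ j) * h j) i)
    (hout : ∀ i ∉ S, x' i = x₀ i + h i) :
    ∑ i, |x' i| = ∑ i, |x₀ i + h i| ∧ ∑ i, (x₀ i + h i) ^ 2 ≤ ∑ i, x' i ^ 2 := by
  set t := fun j => sign (x₀ j) * h j
  have hxS : ∀ i ∈ S, x₀ i + h i = x₀ i + sign (x₀ i) * t i := fun i hi => by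
    simp only [t, ← mul_assoc, sign_mul_sign_of_ne_zero (hx₀ i hi), one_mul]
  have ht : ∑ i ∈ S, |t i| ≤ |x₀ i₁| := (sum_abs_sign_mul hx₀ h).trans_le hh
  constructor
  · refine sum_eq_sum_of_sum_eq_of_eq_off ?_ fun i hi => by rw [hout i hi]
    calc ∑ i ∈ S, |x' i| = ∑ i ∈ S, |x₀ i + sign (x₀ i) * concentrate S i₀ i₁ t i| :=
          sum_congr rfl fun i hi => by rw [hx'S i hi]
      _ = ∑ i ∈ S, |x₀ i + sign (x₀ i) * t i| :=
          sum_abs_add_sign_mul_concentrate h₀ h₁ hne hx₀ (fun i hi => (hw i hi).1) ht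
      _ = ∑ i ∈ S, |x₀ i + h i| := sum_congr rfl fun i hi => by rw [hxS i hi]
  · refine sum_le_sum_of_sum_le_of_eq_off ?_ fun i hi => by rw [hout i hi]
    calc ∑ i ∈ S, (x₀ i + h i) ^ 2 = ∑ i ∈ S, (x₀ i + sign (x₀ i) * t i) ^ 2 :=
          sum_congr rfl fun i hi => by rw [hxS i hi]
      _ ≤ ∑ i ∈ S, (x₀ i + sign (x₀ i) * concentrate S i₀ i₁ t i) ^ 2 :=
          sum_sq_add_sign_mul_le_concentrate h₀ h₁ hne hx₀ hw t
      _ = ∑ i ∈ S, x' i ^ 2 := sum_congr rfl fun i hi => by rw [hx'S i hi]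

end Concentrate

lemma sum_abs_div_sqrt_sum_sq_le {ι : Type*} [Fintype ι] {f g : ι → ℝ}
    (habs : ∑ i, |g i| = ∑ i, |f i|) (hsq : ∑ i, f i ^ 2 ≤ ∑ i, g i ^ 2) :
    (∑ i, |g i|) / √(∑ i, g i ^ 2) ≤ (∑ i, |f i|) / √(∑ i, f i ^ 2) := by
  rw [habs]
  rcases (sqrt_nonneg (∑ i, f i ^ 2)).eq_or_lt with h0 | hpos
  · have hf : ∀ i ∈ univ, f i ^ 2 = 0 :=
      (sum_eq_zero_iff_of_nonneg fun i _ => sq_nonneg (f i)).mp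
        ((sqrt_eq_zero (sum_nonneg fun i _ => sq_nonneg _)).mp h0.symm)
    have hf1 : ∑ i, |f i| = 0 := sum_eq_zero fun i hi => by simpa using hf i hi
    rw [hf1, zero_div, ← h0, div_zero]
  · exact div_le_div_of_nonneg_left (sum_nonneg fun i _ => abs_nonneg _) hpos (sqrt_le_sqrt hsq)

theorem stmt_8 (n s : ℕ) (hs : 2 ≤ s) (hsn : s ≤ n)
    (x0 h : Fin n → ℝ)
    (hnz : ∀ i : Fin n, i.val < s → x0 i ≠ 0)
    (hsort : ∀ i j : Fin n, i ≤ j → j.val < s → |x0 j| ≤ |x0 i|)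
    (hh : (∑ i, |h i|) ≤ |x0 ⟨s - 1, by omega⟩|)
    (β γ : ℝ)
    (hβ : β = ∑ i ∈ Finset.univ.filter (fun i : Fin n => i.val < s),
        Real.sign (x0 i) * h i)
    (hγ : γ = ∑ i ∈ Finset.univ.filter (fun i : Fin n => i.val < s), |h i|)
    (x' : Fin n → ℝ)
    (hx' : x' = fun i =>
      if i.val = 0 then x0 i + Real.sign (x0 i) * ((γ + β) / 2)
      else if i.val = s - 1 then x0 i - Real.sign (x0 i) * ((γ - β) / 2)
      else if i.val < s then x0 i
      else x0 i + h i) :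
    (∑ i, |x' i|) = (∑ i, |x0 i + h i|) ∧
    Real.sqrt (∑ i, (x' i) ^ 2) ≥ Real.sqrt (∑ i, (x0 i + h i) ^ 2) ∧
    (∑ i, |x0 i + h i|) / Real.sqrt (∑ i, (x0 i + h i) ^ 2)
      ≥ (∑ i, |x' i|) / Real.sqrt (∑ i, (x' i) ^ 2) := by
  set S := univ.filter (fun i : Fin n => i.val < s) with hS
  have hmem : ∀ i : Fin n, i ∈ S ↔ i.val < s := by simp [hS]
  set i₀ : Fin n := ⟨0, by omega⟩
  set i₁ : Fin n := ⟨s - 1, by omega⟩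
  have h₀ : i₀ ∈ S := (hmem _).mpr (by simp only [i₀]; omega)
  have h₁ : i₁ ∈ S := (hmem _).mpr (by simp only [i₁]; omega)
  have hne : i₀ ≠ i₁ := by simp only [i₀, i₁, ne_eq, Fin.ext_iff]; omega
  have hx0 : ∀ i ∈ S, x0 i ≠ 0 := fun i hi => hnz i ((hmem i).mp hi)
  have hw : ∀ i ∈ S, |x0 i| ∈ Set.Icc (|x0 i₁|) (|x0 i₀|) := fun i hi =>
    have hi := (hmem i).mp hi
    ⟨hsort i i₁ (Fin.le_def.mpr (by simp only [i₁]; omega)) (by simp only [i₁]; omega),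
      hsort i₀ i (Fin.le_def.mpr (Nat.zero_le _)) hi⟩
  have hhS : ∑ i ∈ S, |h i| ≤ |x0 i₁| :=
    (sum_le_sum_of_subset_of_nonneg (subset_univ S) fun i _ _ => abs_nonneg _).trans hh
  have hx'S : ∀ i ∈ S, x' i =
      x0 i + sign (x0 i) * concentrate S i₀ i₁ (fun j => sign (x0 j) * h j) i := fun i hi => by
    have hi := (hmem i).mp hi
    simp only [hx', concentrate_sign_mul_apply hx0, ← hγ, ← hβ, Fin.ext_iff, i₀, i₁]
    split_ifs <;> ring
  have hout : ∀ i ∉ S, x' i = x0 i + h i := fun i hi => by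
    have hi := (hmem i).not.mp hi
    simp only [hx']
    rw [if_neg (by omega), if_neg (by omega), if_neg hi]
  obtain ⟨hl1, hl2⟩ :=
    sum_abs_eq_and_sum_sq_le_of_concentrate h₀ h₁ hne hx0 hw hhS hx'S hout
  exact ⟨hl1, sqrt_le_sqrt hl2, sum_abs_div_sqrt_sum_sq_le hl1 hl2⟩
end

section
/- Let x₀, x* ∈ ℝⁿ be nonzero with x* ≠ x₀, and suppose ⟨x₀, x*⟩ < (1 − α²/2)‖x₀‖₂‖x*‖₂ for some 0 < α < 1, and ‖x*‖₁/‖x*‖₂ ≤ ‖x₀‖₁/‖x₀‖₂ ≤ √s. Then ‖x* − x₀‖₁/‖x* − x₀‖₂ ≤ 4√s/α. -/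
open Finset Real

lemma sum_sq_pos {n : ℕ} (x : Fin n → ℝ) (hx : x ≠ 0) : 0 < ∑ i, (x i) ^ 2 := by
  rcases Function.ne_iff.mp hx with ⟨i, hi⟩
  have h0 : (0:ℝ) < (x i) ^ 2 := by
    have := pow_pos (abs_pos.mpr hi) 2
    rwa [sq_abs] at this
  calc (0:ℝ) < (x i)^2 := h0
    _ ≤ ∑ j, (x j)^2 :=
      Finset.single_le_sum (f := fun j => (x j)^2) (fun j _ => sq_nonneg _) (Finset.mem_univ i)

set_option maxHeartbeats 1000000 in
theorem stmt_13 (n : ℕ) (s : ℝ) (hs : 0 < s)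
    (x₀ xs : Fin n → ℝ) (hx₀ : x₀ ≠ 0) (hxs : xs ≠ 0) (hne : xs ≠ x₀)
    (α : ℝ) (hα0 : 0 < α) (hα1 : α < 1)
    (hangle : (∑ i, x₀ i * xs i)
      < (1 - α ^ 2 / 2) * Real.sqrt (∑ i, (x₀ i) ^ 2) * Real.sqrt (∑ i, (xs i) ^ 2))
    (hratio1 : (∑ i, |xs i|) / Real.sqrt (∑ i, (xs i) ^ 2)
      ≤ (∑ i, |x₀ i|) / Real.sqrt (∑ i, (x₀ i) ^ 2))
    (hratio2 : (∑ i, |x₀ i|) / Real.sqrt (∑ i, (x₀ i) ^ 2) ≤ Real.sqrt s) :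
    (∑ i, |xs i - x₀ i|) / Real.sqrt (∑ i, (xs i - x₀ i) ^ 2)
      ≤ 4 * Real.sqrt s / α := by
  set a : ℝ := Real.sqrt (∑ i, (x₀ i) ^ 2) with ha
  set b : ℝ := Real.sqrt (∑ i, (xs i) ^ 2) with hb
  have ha2 : 0 < ∑ i, (x₀ i) ^ 2 := sum_sq_pos x₀ hx₀
  have hb2 : 0 < ∑ i, (xs i) ^ 2 := sum_sq_pos xs hxs
  have hapos : 0 < a := Real.sqrt_pos.mpr ha2
  have hbpos : 0 < b := Real.sqrt_pos.mpr hb2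
  have hasq : a ^ 2 = ∑ i, (x₀ i) ^ 2 := Real.sq_sqrt ha2.le
  have hbsq : b ^ 2 = ∑ i, (xs i) ^ 2 := Real.sq_sqrt hb2.le
  have hts : 0 ≤ Real.sqrt s := Real.sqrt_nonneg s
  -- ℓ1 bounds
  have h1a : (∑ i, |x₀ i|) ≤ Real.sqrt s * a := by
    have := (div_le_iff₀ hapos).mp hratio2; linarith
  have h1b : (∑ i, |xs i|) ≤ Real.sqrt s * b := by
    have h := hratio1.trans hratio2
    have := (div_le_iff₀ hbpos).mp h; linarith
  have hnum : (∑ i, |xs i - x₀ i|) ≤ Real.sqrt s * (a + b) := by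
    have h : (∑ i, |xs i - x₀ i|) ≤ (∑ i, |xs i|) + (∑ i, |x₀ i|) := by
      rw [← Finset.sum_add_distrib]
      exact Finset.sum_le_sum fun i _ => (abs_sub (xs i) (x₀ i))
    calc (∑ i, |xs i - x₀ i|) ≤ (∑ i, |xs i|) + (∑ i, |x₀ i|) := h
      _ ≤ Real.sqrt s * b + Real.sqrt s * a := add_le_add h1b h1a
      _ = Real.sqrt s * (a + b) := by ring
  -- denominator expansion
  have hD : (∑ i, (xs i - x₀ i) ^ 2)
      = b ^ 2 + a ^ 2 - 2 * ∑ i, x₀ i * xs i := by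
    have hp : ∀ i, (xs i - x₀ i) ^ 2 = (xs i) ^ 2 + (x₀ i) ^ 2 - 2 * (x₀ i * xs i) :=
      fun i => by ring
    simp_rw [hp, Finset.sum_sub_distrib, Finset.sum_add_distrib, ← Finset.mul_sum,
      hasq, hbsq]
  have hcoef : (0:ℝ) ≤ 1 - α ^ 2 / 2 := by nlinarith
  have hDlb : α ^ 2 / 2 * (a ^ 2 + b ^ 2) ≤ ∑ i, (xs i - x₀ i) ^ 2 := by
    rw [hD]
    nlinarith [mul_nonneg hcoef (sq_nonneg (a - b)), hangle]
  have hDpos : 0 < ∑ i, (xs i - x₀ i) ^ 2 := by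
    have h0 : 0 < α ^ 2 / 2 * (a ^ 2 + b ^ 2) := by positivity
    linarith
  set c : ℝ := Real.sqrt ((a ^ 2 + b ^ 2) / 2) with hc
  have hcpos : 0 < c := Real.sqrt_pos.mpr (by positivity)
  have hsqrtD : α * c ≤ Real.sqrt (∑ i, (xs i - x₀ i) ^ 2) := by
    have h := Real.sqrt_le_sqrt hDlb
    have heq : Real.sqrt (α ^ 2 / 2 * (a ^ 2 + b ^ 2)) = α * c := by
      rw [show α ^ 2 / 2 * (a ^ 2 + b ^ 2) = α ^ 2 * ((a ^ 2 + b ^ 2) / 2) by ring,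
        Real.sqrt_mul (by positivity), Real.sqrt_sq hα0.le, hc]
    rwa [heq] at h
  have hab : a + b ≤ 2 * c := by
    have h2 : (a + b) ^ 2 ≤ (2 * c) ^ 2 := by
      rw [mul_pow, hc, Real.sq_sqrt (by positivity)]
      nlinarith [sq_nonneg (a - b)]
    exact (pow_le_pow_iff_left₀ (by linarith) (by linarith) two_ne_zero).mp h2
  -- finish
  set D : ℝ := Real.sqrt (∑ i, (xs i - x₀ i) ^ 2) with hDdef
  have hden : 0 < D := Real.sqrt_pos.mpr hDpos
  rw [div_le_div_iff₀ hden hα0]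
  calc (∑ i, |xs i - x₀ i|) * α ≤ Real.sqrt s * (a + b) * α :=
        mul_le_mul_of_nonneg_right hnum hα0.le
    _ ≤ Real.sqrt s * (2 * c) * α :=
        mul_le_mul_of_nonneg_right (mul_le_mul_of_nonneg_left hab hts) hα0.le
    _ = 2 * Real.sqrt s * (α * c) := by ring
    _ ≤ 2 * Real.sqrt s * D :=
        mul_le_mul_of_nonneg_left hsqrtD (by positivity)
    _ ≤ 4 * Real.sqrt s * D :=
        mul_le_mul_of_nonneg_right (by linarith : 2 * Real.sqrt s ≤ 4 * Real.sqrt s) hden.le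
end

section
/- Let x₀ ∈ ℝⁿ be s-sparse with support S, and let x* ∈ ℝⁿ satisfy ‖x*‖₁ ≤ ‖x₀‖₁ and x* ≠ x₀. Then ‖x*_{Sᶜ}‖₁ ≤ ‖(x* − x₀)_S‖₁, and consequently ‖x* − x₀‖₁/‖x* − x₀‖₂ ≤ √(8s). -/
open Finset Real

/-!
Since `x₀` vanishes off `S`, the triangle inequality on `S` turns `‖x*‖₁ ≤ ‖x₀‖₁` into the cone
condition `‖x*_{Sᶜ}‖₁ ≤ ‖h_S‖₁` for `h = x* − x₀`. Hence `‖h‖₁ ≤ 2‖h_S‖₁`, and Cauchy–Schwarz on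
the at most `s` coordinates of `S` gives `‖h_S‖₁ ≤ √s ‖h‖₂`, so `‖h‖₁ ≤ √(4s) ‖h‖₂ ≤ √(8s) ‖h‖₂`.
-/

theorem sum_abs_le_sqrt_card_mul_sqrt_sum_sq {ι : Type*} (S : Finset ι) (f : ι → ℝ) :
    ∑ i ∈ S, |f i| ≤ √(#S : ℝ) * √(∑ i ∈ S, f i ^ 2) := by
  rw [← sqrt_mul (Nat.cast_nonneg _)]
  apply le_sqrt_of_sq_le
  simpa only [sq_abs] using sq_sum_le_card_mul_sum_sq (s := S) (f := fun i => |f i|)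

section Support

variable {ι : Type*} [Fintype ι] [DecidableEq ι] {S : Finset ι} {x x₀ : ι → ℝ}

theorem sum_compl_abs_le_sum_abs_sub (hx₀ : ∀ i ∉ S, x₀ i = 0)
    (hl1 : ∑ i, |x i| ≤ ∑ i, |x₀ i|) :
    ∑ i ∈ Sᶜ, |x i| ≤ ∑ i ∈ S, |x i - x₀ i| := by
  have hx₀_sum : ∑ i, |x₀ i| = ∑ i ∈ S, |x₀ i| :=
    (sum_subset (subset_univ S) fun i _ hi => by rw [hx₀ i hi, abs_zero]).symm
  have htri : ∑ i ∈ S, |x₀ i| ≤ ∑ i ∈ S, |x i| + ∑ i ∈ S, |x i - x₀ i| := by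
    rw [← sum_add_distrib]
    refine sum_le_sum fun i _ => ?_
    have := abs_sub_abs_le_abs_sub (x₀ i) (x i)
    rw [abs_sub_comm] at this
    linarith
  have hx_sum := sum_add_sum_compl S fun i => |x i|
  linarith

theorem sum_abs_sub_le_two_mul_sum_abs_sub (hx₀ : ∀ i ∉ S, x₀ i = 0)
    (hl1 : ∑ i, |x i| ≤ ∑ i, |x₀ i|) :
    ∑ i, |x i - x₀ i| ≤ 2 * ∑ i ∈ S, |x i - x₀ i| := by
  have hcompl : ∑ i ∈ Sᶜ, |x i - x₀ i| = ∑ i ∈ Sᶜ, |x i| :=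
    sum_congr rfl fun i hi => by rw [hx₀ i (mem_compl.mp hi), sub_zero]
  rw [← sum_add_sum_compl S, hcompl]
  linarith [sum_compl_abs_le_sum_abs_sub hx₀ hl1]

end Support

theorem stmt_14_general (n s : ℕ) (x₀ xs : Fin n → ℝ) (S : Finset (Fin n))
    (hS : ∀ i, x₀ i ≠ 0 ↔ i ∈ S) (hcard : S.card ≤ s)
    (hl1 : (∑ i, |xs i|) ≤ ∑ i, |x₀ i|) :
    (∑ i ∈ Sᶜ, |xs i|) ≤ (∑ i ∈ S, |xs i - x₀ i|) ∧
    (∑ i, |xs i - x₀ i|) / Real.sqrt (∑ i, (xs i - x₀ i) ^ 2)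
      ≤ Real.sqrt (8 * s) := by
  have hx₀ : ∀ i ∉ S, x₀ i = 0 := fun i hi => not_not.mp (mt (hS i).mp hi)
  refine ⟨sum_compl_abs_le_sum_abs_sub hx₀ hl1,
    div_le_of_le_mul₀ (sqrt_nonneg _) (sqrt_nonneg _) ?_⟩
  calc ∑ i, |xs i - x₀ i|
      ≤ 2 * ∑ i ∈ S, |xs i - x₀ i| := sum_abs_sub_le_two_mul_sum_abs_sub hx₀ hl1
    _ ≤ 2 * (√(#S : ℝ) * √(∑ i ∈ S, (xs i - x₀ i) ^ 2)) := by
        gcongr; exact sum_abs_le_sqrt_card_mul_sqrt_sum_sq S _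
    _ ≤ 2 * (√(s : ℝ) * √(∑ i, (xs i - x₀ i) ^ 2)) := by
        gcongr; exact subset_univ S
    _ = √(4 * s) * √(∑ i, (xs i - x₀ i) ^ 2) := by
        rw [sqrt_mul (by norm_num), show (4 : ℝ) = 2 ^ 2 by norm_num, sqrt_sq (by norm_num)]
        ring
    _ ≤ √(8 * s) * √(∑ i, (xs i - x₀ i) ^ 2) := by gcongr; norm_num

theorem stmt_14 (n s : ℕ) (x₀ xs : Fin n → ℝ) (S : Finset (Fin n))
    (hS : ∀ i, x₀ i ≠ 0 ↔ i ∈ S) (hcard : S.card ≤ s)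
    (hl1 : (∑ i, |xs i|) ≤ ∑ i, |x₀ i|) (hne : xs ≠ x₀) :
    (∑ i ∈ Sᶜ, |xs i|) ≤ (∑ i ∈ S, |xs i - x₀ i|) ∧
    (∑ i, |xs i - x₀ i|) / Real.sqrt (∑ i, (xs i - x₀ i) ^ 2)
      ≤ Real.sqrt (8 * s) :=
  stmt_14_general n s x₀ xs S hS hcard hl1
end

section
/- Let u, w ∈ ℝⁿ with ⟨u, w⟩ = 0 and u + w ≠ 0, and suppose ‖u‖₁ > ‖w‖₁ and ‖u‖₂ > ‖w‖₂ > 0. Define v = max(‖w‖₁/‖u‖₁, ‖w‖₂/‖u‖₂) ∈ (0,1). Then ‖u + w‖₁/‖u + w‖₂ ≥ ((1 − v)/√(1 + v²)) · ‖u‖₁/‖u‖₂. -/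
open Finset Real

theorem stmt_16 (n : ℕ) (u w : Fin n → ℝ)
    (horth : (∑ i, u i * w i) = 0) (hne : u + w ≠ 0)
    (hl1 : (∑ i, |w i|) < ∑ i, |u i|)
    (hl2 : Real.sqrt (∑ i, (w i) ^ 2) < Real.sqrt (∑ i, (u i) ^ 2))
    (hw2 : 0 < Real.sqrt (∑ i, (w i) ^ 2))
    (v : ℝ)
    (hv : v = max ((∑ i, |w i|) / (∑ i, |u i|))
        (Real.sqrt (∑ i, (w i) ^ 2) / Real.sqrt (∑ i, (u i) ^ 2))) :
    (∑ i, |u i + w i|) / Real.sqrt (∑ i, (u i + w i) ^ 2)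
      ≥ ((1 - v) / Real.sqrt (1 + v ^ 2))
          * ((∑ i, |u i|) / Real.sqrt (∑ i, (u i) ^ 2)) := by
  have hB1 : (0:ℝ) ≤ ∑ i, |w i| := Finset.sum_nonneg fun i _ => abs_nonneg _
  have hA1 : (0:ℝ) < ∑ i, |u i| := lt_of_le_of_lt hB1 hl1
  have hA2 : 0 < Real.sqrt (∑ i, (u i) ^ 2) := hw2.trans hl2
  have hA2sq : (0:ℝ) < ∑ i, (u i) ^ 2 := Real.sqrt_pos.mp hA2
  have hW2sq : (0:ℝ) ≤ ∑ i, (w i) ^ 2 := Finset.sum_nonneg fun i _ => sq_nonneg _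
  -- v bounds
  have hv1 : v < 1 := by
    rw [hv]
    exact max_lt ((div_lt_one hA1).mpr hl1) ((div_lt_one hA2).mpr hl2)
  have hvB1 : (∑ i, |w i|) ≤ v * ∑ i, |u i| := by
    have h := le_max_left ((∑ i, |w i|) / (∑ i, |u i|))
      (Real.sqrt (∑ i, (w i) ^ 2) / Real.sqrt (∑ i, (u i) ^ 2))
    rw [← hv] at h
    exact (div_le_iff₀ hA1).mp h
  have hvB2 : Real.sqrt (∑ i, (w i) ^ 2) ≤ v * Real.sqrt (∑ i, (u i) ^ 2) := by
    have h := le_max_right ((∑ i, |w i|) / (∑ i, |u i|))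
      (Real.sqrt (∑ i, (w i) ^ 2) / Real.sqrt (∑ i, (u i) ^ 2))
    rw [← hv] at h
    exact (div_le_iff₀ hA2).mp h
  have hv0 : 0 < v := lt_of_lt_of_le (by positivity) hvB2 |>.trans_le (le_abs_self _) |> fun _ => by
    nlinarith [hw2, hvB2, hA2]
  -- Pythagorean identity
  have hsum : (∑ i, (u i + w i) ^ 2) = (∑ i, (u i) ^ 2) + ∑ i, (w i) ^ 2 := by
    have h : ∀ i ∈ Finset.univ (α := Fin n),
        (u i + w i) ^ 2 = ((u i) ^ 2 + (w i) ^ 2) + 2 * (u i * w i) := by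
      intro i _; ring
    rw [Finset.sum_congr rfl h, Finset.sum_add_distrib, Finset.sum_add_distrib,
      ← Finset.mul_sum, horth]
    ring
  -- ℓ1 lower bound
  have hN1 : (∑ i, |u i|) - (∑ i, |w i|) ≤ ∑ i, |u i + w i| := by
    have h : ∀ i ∈ Finset.univ (α := Fin n), |u i| - |w i| ≤ |u i + w i| := by
      intro i _
      have h := abs_sub_abs_le_abs_sub (u i) (-(w i))
      simpa [sub_neg_eq_add] using h
    calc (∑ i, |u i|) - (∑ i, |w i|) = ∑ i, (|u i| - |w i|) := by
          rw [Finset.sum_sub_distrib]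
      _ ≤ ∑ i, |u i + w i| := Finset.sum_le_sum h
  -- ℓ2 quadratic bound
  have hw2sq : (∑ i, (w i) ^ 2) ≤ v ^ 2 * ∑ i, (u i) ^ 2 := by
    have h := mul_self_le_mul_self (Real.sqrt_nonneg (∑ i, (w i) ^ 2)) hvB2
    rw [Real.mul_self_sqrt hW2sq] at h
    nlinarith [Real.sq_sqrt hA2sq.le, Real.sqrt_nonneg (∑ i, (u i) ^ 2)]
  have hN2 : Real.sqrt (∑ i, (u i + w i) ^ 2)
      ≤ Real.sqrt (1 + v ^ 2) * Real.sqrt (∑ i, (u i) ^ 2) := by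
    rw [hsum, ← Real.sqrt_mul (by positivity)]
    apply Real.sqrt_le_sqrt
    nlinarith
  have hN2pos : 0 < Real.sqrt (∑ i, (u i + w i) ^ 2) := by
    rw [hsum]
    exact Real.sqrt_pos.mpr (by linarith)
  rw [ge_iff_le, div_mul_div_comm]
  apply div_le_div₀ (Finset.sum_nonneg fun i _ => abs_nonneg _) ?_ hN2pos hN2
  nlinarith
end
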